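/- arXiv:1205.1752 — 2 statements merged into one kernel-verified Lean document; each statement's English description precedes it below -/
import Mathlib

section
/- Let H be a graph on vertices {1,…,p}, and for each i let G_i be a graph with a vertex subset S_i such that either S_i or V(G_i)\S_i is (k_i,τ_i)-regular in G_i. Let G be the (H,S)-generalized join: the disjoint union of the G_i's with every vertex of S_i joined to every vertex of S_j whenever ij ∈ E(H). If λ is a non-main eigenvalue of some G_i with λ ≠ k_i − τ_i, then λ is an eigenvalue of G. -/
open scoped Classical

/-- Adjacency matrix of a simple graph over the reals. -/
noncomputable def adjMat {W : Type*} [Fintype W] (G : SimpleGraph W) : Matrix W W ℝ :=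
  fun x y => if G.Adj x y then 1 else 0

/-- `μ` is an eigenvalue of the adjacency matrix of `G`. -/
def IsEigen {W : Type*} [Fintype W] (G : SimpleGraph W) (μ : ℝ) : Prop :=
  ∃ v : W → ℝ, v ≠ 0 ∧ (adjMat G).mulVec v = μ • v

/-- Largest adjacency eigenvalue. -/
noncomputable def lamMax {W : Type*} [Fintype W] (G : SimpleGraph W) : ℝ :=
  sSup {μ | IsEigen G μ}

/-- Smallest adjacency eigenvalue. -/
noncomputable def lamMin {W : Type*} [Fintype W] (G : SimpleGraph W) : ℝ :=
  sInf {μ | IsEigen G μ}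

/-- Spread of a graph: largest minus smallest adjacency eigenvalue. -/
noncomputable def spread {W : Type*} [Fintype W] (G : SimpleGraph W) : ℝ :=
  lamMax G - lamMin G

/-- An eigenvalue is non-main if its eigenspace is orthogonal to the all-ones vector. -/
def IsNonMain {W : Type*} [Fintype W] (G : SimpleGraph W) (μ : ℝ) : Prop :=
  ∀ v : W → ℝ, (adjMat G).mulVec v = μ • v → ∑ i, v i = 0

/-- `S` is a `(k,τ)`-regular set in `G`. -/
def IsKTauRegularSet {W : Type*} [Fintype W] (G : SimpleGraph W) (S : Set W) (k τ : ℕ) : Prop :=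
  (∀ i ∈ S, {j | j ∈ S ∧ G.Adj i j}.ncard = k) ∧
  (∀ i ∉ S, {j | j ∈ S ∧ G.Adj i j}.ncard = τ)

/-- Characteristic vector of a vertex subset. -/
noncomputable def charVec {W : Type*} (S : Set W) : W → ℝ :=
  fun i => if i ∈ S then 1 else 0

/-- `G` is `d`-regular (each row of the adjacency matrix sums to `d`). -/
def IsReg {W : Type*} [Fintype W] (G : SimpleGraph W) (d : ℕ) : Prop :=
  ∀ i, ∑ j, adjMat G i j = (d : ℝ)

/-- Adjacency spectrum of `G` as a multiset (roots of the characteristic polynomial). -/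
noncomputable def specMul {W : Type*} [Fintype W] (G : SimpleGraph W) : Multiset ℝ :=
  (adjMat G).charpoly.roots

/-- The `(H, 𝒮)`-generalized join of the family `G` constrained by vertex subsets `S`. -/
def genJoin {p : ℕ} {V : Fin p → Type*} (H : SimpleGraph (Fin p))
    (G : ∀ i, SimpleGraph (V i)) (S : ∀ i, Set (V i)) : SimpleGraph (Σ i, V i) where
  Adj x y :=
    (∃ (i : Fin p) (a b : V i), x = ⟨i, a⟩ ∧ y = ⟨i, b⟩ ∧ (G i).Adj a b) ∨
    (x.1 ≠ y.1 ∧ H.Adj x.1 y.1 ∧ x.2 ∈ S x.1 ∧ y.2 ∈ S y.1)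
  symm := by
    refine ⟨?_⟩
    rintro x y (⟨i, a, b, rfl, rfl, hab⟩ | ⟨hne, hH, hx, hy⟩)
    · exact Or.inl ⟨i, b, a, rfl, rfl, hab.symm⟩
    · exact Or.inr ⟨hne.symm, hH.symm, hy, hx⟩
  loopless := by
    refine ⟨?_⟩
    rintro x (⟨i, a, b, rfl, h2, hab⟩ | ⟨hne, _⟩)
    · obtain ⟨rfl⟩ := heq_iff_eq.mp (Sigma.mk.inj_iff.mp h2).2
      exact (G i).irrefl hab
    · exact hne rfl

/-- The join of two vertex-disjoint graphs. -/
def joinG {A B : Type*} (G1 : SimpleGraph A) (G2 : SimpleGraph B) : SimpleGraph (A ⊕ B) where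
  Adj x y :=
    match x, y with
    | .inl a, .inl b => G1.Adj a b
    | .inr a, .inr b => G2.Adj a b
    | .inl _, .inr _ => True
    | .inr _, .inl _ => True
  symm := by
    refine ⟨?_⟩
    rintro (a | a) (b | b) h
    · exact h.symm
    · trivial
    · trivial
    · exact h.symm
  loopless := by
    refine ⟨?_⟩
    rintro (a | a) h
    · exact G1.irrefl h
    · exact G2.irrefl h

/-- `μ` is an eigenvalue of the real matrix `M`. -/
def matEigen {p : ℕ} (M : Matrix (Fin p) (Fin p) ℝ) (μ : ℝ) : Prop :=
  ∃ v : Fin p → ℝ, v ≠ 0 ∧ M.mulVec v = μ • v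

noncomputable def matMax {p : ℕ} (M : Matrix (Fin p) (Fin p) ℝ) : ℝ :=
  sSup {μ | matEigen M μ}

noncomputable def matMin {p : ℕ} (M : Matrix (Fin p) (Fin p) ℝ) : ℝ :=
  sInf {μ | matEigen M μ}

noncomputable def matSpread {p : ℕ} (M : Matrix (Fin p) (Fin p) ℝ) : ℝ :=
  matMax M - matMin M

/-- The matrix `M = A(H) N + D` associated with an `H`-join of regular graphs. -/
noncomputable def Mjoin {p : ℕ} (H : SimpleGraph (Fin p)) (n d : Fin p → ℕ) :
    Matrix (Fin p) (Fin p) ℝ :=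
  adjMat H * Matrix.diagonal (fun i => (n i : ℝ)) + Matrix.diagonal (fun i => (d i : ℝ))

/-- Average degree of a graph. -/
noncomputable def avgDeg {W : Type*} [Fintype W] (G : SimpleGraph W) : ℝ :=
  2 * G.edgeSet.ncard / Fintype.card W

/-- The graph `G(n,k) = K_k ∨ K̄_{n-k}`. -/
def Gnk (n k : ℕ) : SimpleGraph (Fin k ⊕ Fin (n - k)) :=
  joinG (⊤ : SimpleGraph (Fin k)) (⊥ : SimpleGraph (Fin (n - k)))


/-!
Let `v` be a `μ`-eigenvector of `A(G_i)` orthogonal to `𝟙`, and `T` the `(k, τ)`-regular one of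
`S_i`, `S_iᶜ`. Then `A χ_T = (k - τ) χ_T + τ 𝟙`, so by symmetry of `A`,
`μ ⟨v, χ_T⟩ = ⟨v, A χ_T⟩ = (k - τ) ⟨v, χ_T⟩`, forcing `⟨v, χ_T⟩ = 0`, hence also `⟨v, χ_{S_i}⟩ = 0`.
Extending `v` by zero to the join gives an eigenvector: a vertex outside block `i` sees either
none or all of `S_i`, hence sees the sum `⟨v, χ_{S_i}⟩ = 0`.
-/

open Matrix

lemma charVec_compl {W : Type*} (T : Set W) : charVec Tᶜ = 1 - charVec T := by
  ext x
  by_cases hx : x ∈ T <;> simp [charVec, hx]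

section Regular

variable {W : Type*} [Fintype W] {G : SimpleGraph W} {T : Set W} {k τ : ℕ}

lemma adjMat_transpose (G : SimpleGraph W) : (adjMat G)ᵀ = adjMat G := by
  ext x y
  simp [adjMat, G.adj_comm]

lemma adjMat_mulVec_charVec_apply (G : SimpleGraph W) (T : Set W) (x : W) :
    (adjMat G *ᵥ charVec T) x = {y | y ∈ T ∧ G.Adj x y}.ncard := by
  rw [Set.ncard_eq_toFinset_card', Set.toFinset_ofPred]
  simp [mulVec, dotProduct, adjMat, charVec, ← ite_and, Finset.sum_boole]

lemma IsKTauRegularSet.adjMat_mulVec_charVec (hT : IsKTauRegularSet G T k τ) :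
    adjMat G *ᵥ charVec T = ((k : ℝ) - τ) • charVec T + (τ : ℝ) • 1 := by
  ext x
  rw [adjMat_mulVec_charVec_apply]
  by_cases hx : x ∈ T <;> simp [hT.1 x, hT.2 x, charVec, hx]

lemma IsKTauRegularSet.dotProduct_charVec_eq_zero (hT : IsKTauRegularSet G T k τ) {μ : ℝ}
    (hne : μ ≠ (k : ℝ) - τ) {v : W → ℝ} (hv : adjMat G *ᵥ v = μ • v) (hsum : ∑ x, v x = 0) :
    v ⬝ᵥ charVec T = 0 := by
  have h : μ * (v ⬝ᵥ charVec T) = ((k : ℝ) - τ) * (v ⬝ᵥ charVec T) :=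
    calc μ * (v ⬝ᵥ charVec T) = (adjMat G *ᵥ v) ⬝ᵥ charVec T := by
          rw [hv, smul_dotProduct, smul_eq_mul]
      _ = v ⬝ᵥ (adjMat G *ᵥ charVec T) := by
          rw [dotProduct_mulVec, ← mulVec_transpose, adjMat_transpose]
      _ = ((k : ℝ) - τ) * (v ⬝ᵥ charVec T) := by
          rw [hT.adjMat_mulVec_charVec, dotProduct_add, dotProduct_smul, dotProduct_smul,
            dotProduct_one, hsum, smul_zero, add_zero, smul_eq_mul]
  by_contra h0
  exact hne (mul_right_cancel₀ h0 h)

end Regular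

section Join

variable {ι : Type*} [DecidableEq ι] {V : ι → Type*}

def sigmaSingle (i : ι) (v : V i → ℝ) : (Σ j, V j) → ℝ :=
  fun x => Pi.single (M := fun j => V j → ℝ) i v x.1 x.2

@[simp]
lemma sigmaSingle_mk_self (i : ι) (v : V i → ℝ) (a : V i) : sigmaSingle i v ⟨i, a⟩ = v a := by
  simp [sigmaSingle]

lemma sigmaSingle_mk_of_ne {i j : ι} (h : j ≠ i) (v : V i → ℝ) (a : V j) :
    sigmaSingle i v ⟨j, a⟩ = 0 := by
  simp [sigmaSingle, Pi.single_eq_of_ne h]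

lemma sigmaSingle_smul (i : ι) (c : ℝ) (v : V i → ℝ) :
    sigmaSingle i (c • v) = c • sigmaSingle i v := by
  ext x
  simp [sigmaSingle, Pi.single_smul]

lemma sigmaSingle_ne_zero {i : ι} {v : V i → ℝ} (hv : v ≠ 0) : sigmaSingle i v ≠ 0 :=
  fun h => hv (funext fun a => by simpa using congrFun h ⟨i, a⟩)

lemma mulVec_sigmaSingle_apply [Fintype ι] [∀ j, Fintype (V j)]
    (M : Matrix (Σ j, V j) (Σ j, V j) ℝ) (i : ι) (v : V i → ℝ) (x : Σ j, V j) :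
    (M *ᵥ sigmaSingle i v) x = ∑ b, M x ⟨i, b⟩ * v b := by
  rw [mulVec, dotProduct, ← Finset.univ_sigma_univ, Finset.sum_sigma,
    Finset.sum_eq_single_of_mem i (Finset.mem_univ i)]
  · simp
  · intro j _ hj
    simp [sigmaSingle_mk_of_ne hj]

end Join

section GenJoin

variable {p : ℕ} {V : Fin p → Type*} (H : SimpleGraph (Fin p)) (G : ∀ i, SimpleGraph (V i))
  (S : ∀ i, Set (V i))

lemma genJoin_adj_mk_self {i : Fin p} {a b : V i} :
    (genJoin H G S).Adj ⟨i, a⟩ ⟨i, b⟩ ↔ (G i).Adj a b := by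
  constructor
  · rintro (⟨i', a', b', h1, h2, hab⟩ | ⟨hne, _⟩)
    · obtain ⟨rfl, ha⟩ := Sigma.mk.inj_iff.mp h1
      obtain ⟨-, hb⟩ := Sigma.mk.inj_iff.mp h2
      rwa [eq_of_heq ha, eq_of_heq hb]
    · exact absurd rfl hne
  · exact fun h => Or.inl ⟨i, a, b, rfl, rfl, h⟩

lemma genJoin_adj_mk_of_ne {i j : Fin p} (hij : j ≠ i) {a : V j} {b : V i} :
    (genJoin H G S).Adj ⟨j, a⟩ ⟨i, b⟩ ↔ H.Adj j i ∧ a ∈ S j ∧ b ∈ S i := by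
  constructor
  · rintro (⟨i', a', b', h1, h2, -⟩ | ⟨-, hH, ha, hb⟩)
    · exact absurd ((Sigma.mk.inj_iff.mp h1).1.trans (Sigma.mk.inj_iff.mp h2).1.symm) hij
    · exact ⟨hH, ha, hb⟩
  · exact fun ⟨hH, ha, hb⟩ => Or.inr ⟨hij, hH, ha, hb⟩

variable [∀ i, Fintype (V i)]

lemma genJoin_adjMat_mulVec_sigmaSingle {i : Fin p} {v : V i → ℝ}
    (hv : v ⬝ᵥ charVec (S i) = 0) :
    adjMat (genJoin H G S) *ᵥ sigmaSingle i v = sigmaSingle i (adjMat (G i) *ᵥ v) := by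
  ext ⟨j, a⟩
  rw [mulVec_sigmaSingle_apply]
  rcases eq_or_ne j i with rfl | hj
  · simp [adjMat, genJoin_adj_mk_self, mulVec, dotProduct]
  · rw [sigmaSingle_mk_of_ne hj]
    by_cases hja : H.Adj j i ∧ a ∈ S j
    · simpa [adjMat, genJoin_adj_mk_of_ne H G S hj, hja, dotProduct, charVec, mul_comm] using hv
    · simp only [adjMat, genJoin_adj_mk_of_ne H G S hj, ite_mul, one_mul, zero_mul]
      exact Finset.sum_eq_zero fun b _ => if_neg fun h => hja ⟨h.1, h.2.1⟩

end GenJoin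

/-- non-main eigenvalues `μ ≠ k_i - τ_i` of the parts survive in the
`(H,𝒮)`-generalized join, when each `S_i` or its complement is `(k_i,τ_i)`-regular. -/
theorem stmt1 {p : ℕ} {V : Fin p → Type*} [∀ i, Fintype (V i)]
    (H : SimpleGraph (Fin p)) (G : ∀ i, SimpleGraph (V i)) (S : ∀ i, Set (V i))
    (k τ : Fin p → ℕ)
    (hS : ∀ i, IsKTauRegularSet (G i) (S i) (k i) (τ i) ∨
               IsKTauRegularSet (G i) (S i)ᶜ (k i) (τ i))
    (i : Fin p) (μ : ℝ) (hnm : IsNonMain (G i) μ) (he : IsEigen (G i) μ)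
    (hne : μ ≠ (k i : ℝ) - (τ i : ℝ)) :
    IsEigen (genJoin H G S) μ := by
  obtain ⟨v, hv0, hv⟩ := he
  have hsum : ∑ x, v x = 0 := hnm v hv
  have hvS : v ⬝ᵥ charVec (S i) = 0 := by
    rcases hS i with hreg | hreg
    · exact hreg.dotProduct_charVec_eq_zero hne hv hsum
    · simpa [charVec_compl, dotProduct_sub, dotProduct_one, hsum] using
        hreg.dotProduct_charVec_eq_zero hne hv hsum
  refine ⟨sigmaSingle i v, sigmaSingle_ne_zero hv0, ?_⟩
  rw [genJoin_adjMat_mulVec_sigmaSingle H G S hvS, hv, sigmaSingle_smul]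
end

section
/- If G is a graph of order n with average degree d̄(G) ≤ n/2, then s(G) ≤ n. -/
/-! With λ₁ and λₙ the extreme adjacency eigenvalues,
`(λ₁ - λₙ)² ≤ 2 (λ₁² + λₙ²) ≤ 2 ∑ λᵢ² = 2 tr A² = 4 |E|`, and the hypothesis on the average degree
says exactly `4 |E| ≤ n²`. -/

open scoped Classical

open Finset Matrix

namespace Matrix

theorem mem_spectrum_iff_exists_mulVec_eq_smul {K n : Type*} [Field K] [Fintype n] [DecidableEq n]
    (A : Matrix n n K) (μ : K) : μ ∈ spectrum K A ↔ ∃ v : n → K, v ≠ 0 ∧ A *ᵥ v = μ • v := by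
  rw [← spectrum_toLin', ← Module.End.hasEigenvalue_iff_mem_spectrum]
  constructor
  · intro hμ
    obtain ⟨v, hv, hv0⟩ := hμ.exists_hasEigenvector
    exact ⟨v, hv0, by simpa using Module.End.mem_eigenspace_iff.mp hv⟩
  · rintro ⟨v, hv0, hAv⟩
    exact Module.End.hasEigenvalue_of_hasEigenvector
      ⟨Module.End.mem_eigenspace_iff.mpr (by simpa using hAv), hv0⟩

theorem IsHermitian.trace_mul_self_eq_sum_sq_eigenvalues {𝕜 n : Type*} [RCLike 𝕜] [Fintype n]
    [DecidableEq n] {A : Matrix n n 𝕜} (hA : A.IsHermitian) :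
    (A * A).trace = ∑ i, (hA.eigenvalues i : 𝕜) ^ 2 := by
  conv_lhs => rw [hA.spectral_theorem, ← map_mul, Unitary.conjStarAlgAut_apply, trace_mul_cycle,
    Unitary.coe_star_mul_self, one_mul, diagonal_mul_diagonal, trace_diagonal]
  simp [sq]

end Matrix

theorem sq_sub_le_two_mul_sum_sq {ι : Type*} [Fintype ι] (f : ι → ℝ) (i j : ι) :
    (f i - f j) ^ 2 ≤ 2 * ∑ k, f k ^ 2 := by
  classical
  obtain rfl | hij := eq_or_ne i j
  · rw [sub_self, zero_pow two_ne_zero]; positivity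
  have hpair : f i ^ 2 + f j ^ 2 ≤ ∑ k, f k ^ 2 := by
    rw [← sum_pair hij (f := fun k => f k ^ 2)]
    exact sum_le_univ_sum_of_nonneg fun k => sq_nonneg (f k)
  nlinarith [sq_nonneg (f i + f j)]

section
variable {W : Type*} [Fintype W] (G : SimpleGraph W)

theorem adjMat_eq_adjMatrix : adjMat G = G.adjMatrix ℝ := rfl

theorem isHermitian_adjMat : (adjMat G).IsHermitian := by
  rw [adjMat_eq_adjMatrix, isHermitian_iff_isSymm]; exact G.isSymm_adjMatrix

theorem setOf_isEigen_eq_range_eigenvalues :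
    {μ | IsEigen G μ} = Set.range (isHermitian_adjMat G).eigenvalues := by
  rw [← (isHermitian_adjMat G).spectrum_real_eq_range_eigenvalues]
  ext μ
  exact (mem_spectrum_iff_exists_mulVec_eq_smul _ μ).symm

theorem trace_adjMat_mul_self : (adjMat G * adjMat G).trace = 2 * G.edgeSet.ncard := by
  simp only [Matrix.trace, Matrix.diag, adjMat_eq_adjMatrix,
    SimpleGraph.adjMatrix_mul_self_apply_self]
  rw [← Nat.cast_sum, G.sum_degrees_eq_twice_card_edges, Set.ncard_eq_toFinset_card']
  push_cast; rfl

theorem sum_sq_eigenvalues_adjMat :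
    ∑ i, (isHermitian_adjMat G).eigenvalues i ^ 2 = 2 * G.edgeSet.ncard := by
  rw [← trace_adjMat_mul_self, (isHermitian_adjMat G).trace_mul_self_eq_sum_sq_eigenvalues]
  simp

theorem spread_sq_le_four_mul_ncard_edgeSet : spread G ^ 2 ≤ 4 * G.edgeSet.ncard := by
  set ev := (isHermitian_adjMat G).eigenvalues
  have hset := setOf_isEigen_eq_range_eigenvalues G
  rcases isEmpty_or_nonempty W with _ | _
  · simp [spread, lamMax, lamMin, hset, Set.range_eq_empty]
  obtain ⟨i, hi⟩ : lamMax G ∈ Set.range ev :=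
    hset ▸ (Set.range_nonempty ev).csSup_mem (Set.finite_range ev)
  obtain ⟨j, hj⟩ : lamMin G ∈ Set.range ev :=
    hset ▸ (Set.range_nonempty ev).csInf_mem (Set.finite_range ev)
  calc spread G ^ 2 = (ev i - ev j) ^ 2 := by rw [spread, hi, hj]
    _ ≤ 2 * ∑ k, ev k ^ 2 := sq_sub_le_two_mul_sum_sq ev i j
    _ = 4 * G.edgeSet.ncard := by rw [sum_sq_eigenvalues_adjMat]; ring

theorem four_mul_ncard_edgeSet_le_sq_of_avgDeg_le
    (h : avgDeg G ≤ (Fintype.card W : ℝ) / 2) :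
    4 * (G.edgeSet.ncard : ℝ) ≤ (Fintype.card W : ℝ) ^ 2 := by
  rcases isEmpty_or_nonempty W with _ | _
  · simp [Set.eq_empty_of_isEmpty G.edgeSet]
  have hn : (0 : ℝ) < Fintype.card W := by exact_mod_cast Fintype.card_pos
  rw [avgDeg, div_le_div_iff₀ hn two_pos] at h
  nlinarith

end

/-- if the average degree is at most `n/2` then `s(G) ≤ n`. -/
theorem stmt6 {W : Type*} [Fintype W] (G : SimpleGraph W)
    (h : avgDeg G ≤ (Fintype.card W : ℝ) / 2) :
    spread G ≤ (Fintype.card W : ℝ) := by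
  have hsq : spread G ^ 2 ≤ (Fintype.card W : ℝ) ^ 2 :=
    (spread_sq_le_four_mul_ncard_edgeSet G).trans
      (four_mul_ncard_edgeSet_le_sq_of_avgDeg_le G h)
  exact (le_abs_self _).trans (abs_le_of_sq_le_sq hsq (Nat.cast_nonneg _))
end
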